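/- Let d ≥ 1, let ε > 0 and set η = |log ε|, and assume εη < 1/(100d). Let A = I + εX be a d×d real matrix with |X_{ik}| ≤ η for all i,k, write c_j = c_j(A), c_j^⊥ = c_j^⊥(A), and α_i^k = ⟨c_i^⊥, c_k⟩ / ‖c_i^⊥‖². Then for all 1 ≤ n ≤ d: (i) | ‖c_n‖² − 1 | ≤ 2εη + dε²η² ≤ 3εη; (ii) | ‖c_n^⊥‖² − 1 | ≤ 3εη; (iii) |α_i^k| ≤ 6εη for all i ≤ n and k > i; (iv) |⟨c_n^⊥, c_k⟩| ≤ 3εη for all k > n. -/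

import Mathlib

open MeasureTheory ProbabilityTheory Filter RealInnerProductSpace

instance matrixMeasurableSpace {d : ℕ} : MeasurableSpace (Matrix (Fin d) (Fin d) ℝ) :=
  inferInstanceAs (MeasurableSpace (Fin d → Fin d → ℝ))

/-- The law of a `d × d` standard Gaussian matrix: all `d²` entries are
independent standard normal random variables. -/
noncomputable def stdGaussianMatrix (d : ℕ) : Measure (Matrix (Fin d) (Fin d) ℝ) :=
  (Measure.pi fun _ : Fin d × Fin d => gaussianReal 0 1).map
    fun f => Matrix.of fun i j => f (i, j)

/-- The `j`-th column (0-based) of a `d × d` matrix, as a vector of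
`EuclideanSpace ℝ (Fin d)`; junk value `0` for `j ≥ d`. -/
noncomputable def col {d : ℕ} (A : Matrix (Fin d) (Fin d) ℝ) (j : ℕ) :
    EuclideanSpace ℝ (Fin d) :=
  if h : j < d then (WithLp.equiv 2 (Fin d → ℝ)).symm (fun i => A i ⟨j, h⟩) else 0

/-- `cCol A k` is the `k`-th column of `A`, 1-based. -/
noncomputable def cCol {d : ℕ} (A : Matrix (Fin d) (Fin d) ℝ) (k : ℕ) :
    EuclideanSpace ℝ (Fin d) := col A (k - 1)

/-- `cPerp A k` is the `k`-th vector (1-based) of the non-normalized Gram–Schmidt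
orthogonalization of the columns of `A`. -/
noncomputable def cPerp {d : ℕ} (A : Matrix (Fin d) (Fin d) ℝ) (k : ℕ) :
    EuclideanSpace ℝ (Fin d) :=
  InnerProductSpace.gramSchmidt ℝ (col A) (k - 1)

/-- `cApprox A k = c_k'(A) = c_k(A) - ∑_{j<k} ⟨c_j(A), c_k(A)⟩ c_j(A)` (1-based `k`). -/
noncomputable def cApprox {d : ℕ} (A : Matrix (Fin d) (Fin d) ℝ) (k : ℕ) :
    EuclideanSpace ℝ (Fin d) :=
  col A (k - 1) - ∑ j ∈ Finset.range (k - 1), (inner ℝ (col A j) (col A (k - 1)) : ℝ) • col A j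

/-- `sval A k` is the `k`-th largest singular value of `A` (1-based), i.e. the
`k`-th largest square root of an eigenvalue of `AᴴA = AᵀA`. -/
noncomputable def sval {d : ℕ} (A : Matrix (Fin d) (Fin d) ℝ) (k : ℕ) : ℝ :=
  ((Finset.univ.val.map fun i =>
      Real.sqrt ((Matrix.isHermitian_conjTranspose_mul_self A).eigenvalues i)).sort (· ≤ ·)).getD
    (d - k) 0

/-- `matProd A n = A_n * A_{n-1} * ⋯ * A_1`. -/
noncomputable def matProd {d : ℕ} (A : ℕ → Matrix (Fin d) (Fin d) ℝ) :
    ℕ → Matrix (Fin d) (Fin d) ℝ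
  | 0 => 1
  | n + 1 => A (n + 1) * matProd A n

/-- `negLog x = log⁻ x = max (0, -log x)`. -/
noncomputable def negLog (x : ℝ) : ℝ := max 0 (-Real.log x)

/-- `theta B j` is the distance from the `j`-th column (1-based) of `B` to the span of
the other columns. -/
noncomputable def theta {d : ℕ} (B : Matrix (Fin d) (Fin d) ℝ) (j : ℕ) : ℝ :=
  Metric.infDist (cCol B j)
    (Submodule.span ℝ {v | ∃ i, 1 ≤ i ∧ i ≤ d ∧ i ≠ j ∧ v = cCol B i} :
      Set (EuclideanSpace ℝ (Fin d)))

/-- `Theta B = min_{1 ≤ j ≤ d} theta B j`. -/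
noncomputable def Theta {d : ℕ} (B : Matrix (Fin d) (Fin d) ℝ) : ℝ :=
  ⨅ j : Fin d, theta B ((j : ℕ) + 1)


open InnerProductSpace

lemma col_inner {d : ℕ} (A : Matrix (Fin d) (Fin d) ℝ) {j k : ℕ} (hj : j < d) (hk : k < d) :
    (inner ℝ (col A j) (col A k) : ℝ) = ∑ i, A i ⟨j, hj⟩ * A i ⟨k, hk⟩ := by
  simp [col, hj, hk, PiLp.inner_apply, RCLike.inner_apply, starRingEnd_apply, mul_comm]

lemma expand_aux {d : ℕ} (ε : ℝ) (X : Matrix (Fin d) (Fin d) ℝ) (j' k' i : Fin d) :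
    (1 + ε • X) i j' * (1 + ε • X) i k' =
      (if i = j' then (if j' = k' then (1:ℝ) else 0) else 0) +
      ((if i = j' then ε * X i k' else 0) +
      ((if i = k' then ε * X i j' else 0) + (ε * X i j') * (ε * X i k'))) := by
  simp only [Matrix.add_apply, Matrix.one_apply, Matrix.smul_apply, smul_eq_mul]
  rcases eq_or_ne i j' with rfl | h1
  · rcases eq_or_ne i k' with rfl | h2
    · simp; try ring
    · simp [h2]; try ring
  · rcases eq_or_ne i k' with rfl | h2
    · simp [h1, Ne.symm h1]; try ring
    · simp [h1, h2]; try ring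

lemma col_bound {d : ℕ} {ε η : ℝ} (hε : 0 ≤ ε) (hη : 0 ≤ η)
    (X : Matrix (Fin d) (Fin d) ℝ) (hX : ∀ i k, |X i k| ≤ η) (j k : ℕ)
    (hj : j < d) (hk : k < d) :
    |(inner ℝ (col (1 + ε • X) j) (col (1 + ε • X) k) : ℝ) - (if j = k then 1 else 0)| ≤
      2 * (ε * η) + d * (ε * η) ^ 2 := by
  set j' : Fin d := ⟨j, hj⟩
  set k' : Fin d := ⟨k, hk⟩
  have hjk : (if j = k then (1:ℝ) else 0) = (if j' = k' then 1 else 0) := by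
    simp [j', k', Fin.mk.injEq]
  rw [col_inner _ hj hk, hjk]
  rw [Finset.sum_congr rfl (fun i _ => expand_aux ε X j' k' i)]
  simp_rw [Finset.sum_add_distrib, Finset.sum_ite_eq' Finset.univ,
    Finset.mem_univ, if_true]
  have h1 : |ε * X j' k'| ≤ ε * η := by
    rw [abs_mul, abs_of_nonneg hε]; exact mul_le_mul_of_nonneg_left (hX _ _) hε
  have h2 : |ε * X k' j'| ≤ ε * η := by
    rw [abs_mul, abs_of_nonneg hε]; exact mul_le_mul_of_nonneg_left (hX _ _) hε
  have h3 : |∑ i : Fin d, (ε * X i j') * (ε * X i k')| ≤ d * (ε * η) ^ 2 := by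
    calc |∑ i : Fin d, (ε * X i j') * (ε * X i k')| ≤
        ∑ i : Fin d, |(ε * X i j') * (ε * X i k')| := Finset.abs_sum_le_sum_abs _ _
      _ ≤ ∑ _i : Fin d, (ε * η) ^ 2 := by
          apply Finset.sum_le_sum
          intro i _
          rw [abs_mul, abs_mul, abs_mul, abs_of_nonneg hε, sq]
          have ha : ε * |X i j'| ≤ ε * η := mul_le_mul_of_nonneg_left (hX _ _) hε
          have hb : ε * |X i k'| ≤ ε * η := mul_le_mul_of_nonneg_left (hX _ _) hε
          exact mul_le_mul ha hb (by positivity) (by positivity)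
      _ = d * (ε * η) ^ 2 := by simp [Finset.card_univ, mul_comm]
  calc |(if j' = k' then (1:ℝ) else 0) + (ε * X j' k' + (ε * X k' j' +
        ∑ i : Fin d, ε * X i j' * (ε * X i k'))) - (if j' = k' then 1 else 0)|
      = |ε * X j' k' + (ε * X k' j' + ∑ i : Fin d, ε * X i j' * (ε * X i k'))| := by
        rw [add_sub_cancel_left]
    _ ≤ |ε * X j' k'| + (|ε * X k' j'| + |∑ i : Fin d, ε * X i j' * (ε * X i k')|) :=
        (abs_add_le _ _).trans (by gcongr; exact abs_add_le _ _)
    _ ≤ ε * η + (ε * η + d * (ε * η) ^ 2) := by gcongr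
    _ = 2 * (ε * η) + d * (ε * η) ^ 2 := by ring

lemma gs_norm_eq {E : Type*} [NormedAddCommGroup E] [InnerProductSpace ℝ E]
    (f : ℕ → E) (n : ℕ) :
    ‖gramSchmidt ℝ f n‖ ^ 2 = (inner ℝ (gramSchmidt ℝ f n) (f n) : ℝ) := by
  conv_rhs => rw [gramSchmidt_def'' ℝ f n]
  rw [inner_add_right, inner_sum, real_inner_self_eq_norm_sq]
  simp_rw [inner_smul_right]
  rw [Finset.sum_eq_zero, add_zero]
  intro i hi
  rw [gramSchmidt_orthogonal ℝ f (Finset.mem_Iio.mp hi).ne', mul_zero]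

lemma gs_bound {d : ℕ} (hd : 1 ≤ d) {ε η : ℝ} (hε : 0 ≤ ε) (hη : 0 ≤ η)
    (hdt : (d : ℝ) * (ε * η) ≤ 1 / 100)
    (X : Matrix (Fin d) (Fin d) ℝ) (hX : ∀ i k, |X i k| ≤ η) :
    ∀ n, n < d → ∀ m, n ≤ m → m < d →
      |(inner ℝ (gramSchmidt ℝ (col (1 + ε • X)) n) (col (1 + ε • X) m) : ℝ) -
        (if n = m then 1 else 0)| ≤ 3 * (ε * η) := by
  set A := 1 + ε • X with hA
  set g := gramSchmidt ℝ (col A) with hg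
  set t := ε * η with hT
  have ht : 0 ≤ t := mul_nonneg hε hη
  have hd1 : (1 : ℝ) ≤ d := by exact_mod_cast hd
  have ht1 : t ≤ 1 / 100 := by nlinarith
  intro n
  induction n using Nat.strong_induction_on with
  | _ n IH =>
    intro hn m hnm hm
    -- norm lower bound for earlier vectors
    have hnormsq : ∀ i, i < n → 97 / 100 ≤ ‖g i‖ ^ 2 := by
      intro i hi
      have h1 := IH i hi (hi.trans hn) i le_rfl (hi.trans hn)
      rw [if_pos rfl, ← gs_norm_eq (col A) i] at h1
      have := abs_le.mp h1
      nlinarith [this.1, this.2]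
    have hinner3 : ∀ i, i < n → ∀ m', i < m' → m' < d →
        |(inner ℝ (g i) (col A m') : ℝ)| ≤ 3 * t := by
      intro i hi m' him' hm'
      have h1 := IH i hi (hi.trans hn) m' him'.le hm'
      rw [if_neg him'.ne] at h1
      simpa using h1
    have hα : ∀ i, i < n → |(inner ℝ (g i) (col A n) : ℝ) / ‖g i‖ ^ 2| ≤ 4 * t := by
      intro i hi
      have h1 := hinner3 i hi n hi hn
      have h2 := hnormsq i hi
      rw [abs_div, abs_of_nonneg (sq_nonneg ‖g i‖)]
      calc |(inner ℝ (g i) (col A n) : ℝ)| / ‖g i‖ ^ 2 ≤ (3 * t) / (97 / 100) :=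
            div_le_div₀ (by positivity) h1 (by norm_num) h2
        _ ≤ 4 * t := by rw [div_le_iff₀ (by norm_num)]; nlinarith
    -- expansion of g n
    have hgdef : (inner ℝ (g n) (col A m) : ℝ) = inner ℝ (col A n) (col A m) -
        ∑ i ∈ Finset.Iio n,
          ((inner ℝ (g i) (col A n) : ℝ) / ‖g i‖ ^ 2) * (inner ℝ (g i) (col A m) : ℝ) := by
      rw [hg, gramSchmidt_def ℝ (col A) n, inner_sub_left, sum_inner]
      congr 1
      apply Finset.sum_congr rfl
      intro i _
      rw [Submodule.starProjection_singleton, inner_smul_left]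
      simp [starRingEnd_apply]
    have hcol := col_bound hε hη X hX n m hn hm
    have hsum : |∑ i ∈ Finset.Iio n,
        ((inner ℝ (g i) (col A n) : ℝ) / ‖g i‖ ^ 2) * (inner ℝ (g i) (col A m) : ℝ)| ≤
        (n : ℝ) * (12 * t ^ 2) := by
      calc |∑ i ∈ Finset.Iio n,
          ((inner ℝ (g i) (col A n) : ℝ) / ‖g i‖ ^ 2) * (inner ℝ (g i) (col A m) : ℝ)|
          ≤ ∑ i ∈ Finset.Iio n,
            |((inner ℝ (g i) (col A n) : ℝ) / ‖g i‖ ^ 2) * (inner ℝ (g i) (col A m) : ℝ)| :=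
            Finset.abs_sum_le_sum_abs _ _
        _ ≤ ∑ _i ∈ Finset.Iio n, 12 * t ^ 2 := by
            apply Finset.sum_le_sum
            intro i hi
            rw [Finset.mem_Iio] at hi
            rw [abs_mul]
            have h1 := hα i hi
            have h2 := hinner3 i hi m (lt_of_lt_of_le hi hnm) hm
            calc |(inner ℝ (g i) (col A n) : ℝ) / ‖g i‖ ^ 2| *
                  |(inner ℝ (g i) (col A m) : ℝ)| ≤ (4 * t) * (3 * t) := by
                  exact mul_le_mul h1 h2 (abs_nonneg _) (by positivity)
              _ = 12 * t ^ 2 := by ring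
        _ = (n : ℝ) * (12 * t ^ 2) := by
            rw [Finset.sum_const, Nat.card_Iio, nsmul_eq_mul]
    have hn_le : (n : ℝ) ≤ d := by exact_mod_cast hn.le
    calc |(inner ℝ (g n) (col A m) : ℝ) - (if n = m then 1 else 0)|
        = |((inner ℝ (col A n) (col A m) : ℝ) - (if n = m then 1 else 0)) +
            (-(∑ i ∈ Finset.Iio n,
              ((inner ℝ (g i) (col A n) : ℝ) / ‖g i‖ ^ 2) * (inner ℝ (g i) (col A m) : ℝ)))| := by
          rw [hgdef]; congr 1; ring
      _ ≤ |(inner ℝ (col A n) (col A m) : ℝ) - (if n = m then 1 else 0)| +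
            |∑ i ∈ Finset.Iio n,
              ((inner ℝ (g i) (col A n) : ℝ) / ‖g i‖ ^ 2) * (inner ℝ (g i) (col A m) : ℝ)| := by
          refine (abs_add_le _ _).trans ?_
          rw [abs_neg]
      _ ≤ (2 * t + d * t ^ 2) + (n : ℝ) * (12 * t ^ 2) := add_le_add hcol hsum
      _ ≤ 3 * t := by nlinarith [mul_nonneg ht ht]

theorem stmt16 {d : ℕ} (hd : 1 ≤ d) (ε : ℝ) (hε : 0 < ε)
    (h : ε * |Real.log ε| < 1 / (100 * d))
    (X : Matrix (Fin d) (Fin d) ℝ) (hX : ∀ i k, |X i k| ≤ |Real.log ε|) :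
    ∀ n, 1 ≤ n → n ≤ d →
      (|‖cCol (1 + ε • X) n‖ ^ 2 - 1| ≤
          2 * (ε * |Real.log ε|) + d * ε ^ 2 * |Real.log ε| ^ 2 ∧
        2 * (ε * |Real.log ε|) + d * ε ^ 2 * |Real.log ε| ^ 2 ≤ 3 * (ε * |Real.log ε|)) ∧
      |‖cPerp (1 + ε • X) n‖ ^ 2 - 1| ≤ 3 * (ε * |Real.log ε|) ∧
      (∀ i k, 1 ≤ i → i ≤ n → i < k → k ≤ d →
        |(inner ℝ (cPerp (1 + ε • X) i) (cCol (1 + ε • X) k) : ℝ) /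
            ‖cPerp (1 + ε • X) i‖ ^ 2| ≤ 6 * (ε * |Real.log ε|)) ∧
      (∀ k, n < k → k ≤ d →
        |(inner ℝ (cPerp (1 + ε • X) n) (cCol (1 + ε • X) k) : ℝ)| ≤
          3 * (ε * |Real.log ε|)) := by
  intro n h1n hnd
  have hη : 0 ≤ |Real.log ε| := abs_nonneg _
  have hε0 : 0 ≤ ε := hε.le
  have hd0 : (0 : ℝ) < d := by exact_mod_cast Nat.lt_of_lt_of_le Nat.zero_lt_one hd
  have hdt : (d : ℝ) * (ε * |Real.log ε|) ≤ 1 / 100 := by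
    have h2 := mul_lt_mul_of_pos_left h hd0
    have h3 : (d : ℝ) * (1 / (100 * d)) = 1 / 100 := by field_simp
    linarith [h3 ▸ h2]
  have ht : 0 ≤ ε * |Real.log ε| := mul_nonneg hε0 hη
  have hd1 : (1 : ℝ) ≤ d := by exact_mod_cast hd
  have ht1 : ε * |Real.log ε| ≤ 1 / 100 := by nlinarith
  have hgs := gs_bound hd hε0 hη hdt X hX
  have hlt : n - 1 < d := by omega
  have hsqbd : ∀ j, j < d →
      |‖gramSchmidt ℝ (col (1 + ε • X)) j‖ ^ 2 - 1| ≤ 3 * (ε * |Real.log ε|) := by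
    intro j hj
    have h1 := hgs j hj j le_rfl hj
    rw [if_pos rfl, ← gs_norm_eq (col (1 + ε • X)) j] at h1
    exact h1
  refine ⟨⟨?_, ?_⟩, ?_, ?_, ?_⟩
  · have h1 := col_bound hε0 hη X hX (n - 1) (n - 1) hlt hlt
    rw [if_pos rfl] at h1
    have h2 : ‖cCol (1 + ε • X) n‖ ^ 2 =
        (inner ℝ (col (1 + ε • X) (n - 1)) (col (1 + ε • X) (n - 1)) : ℝ) := by
      rw [cCol, real_inner_self_eq_norm_sq]
    rw [h2]
    calc |(inner ℝ (col (1 + ε • X) (n - 1)) (col (1 + ε • X) (n - 1)) : ℝ) - 1| ≤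
        2 * (ε * |Real.log ε|) + d * (ε * |Real.log ε|) ^ 2 := h1
      _ = 2 * (ε * |Real.log ε|) + d * ε ^ 2 * |Real.log ε| ^ 2 := by ring
  · nlinarith [mul_le_mul_of_nonneg_right hdt ht]
  · have h1 := hsqbd (n - 1) hlt
    rw [cPerp]
    exact h1
  · intro i k h1i hin hik hkd
    have hik' : i - 1 < k - 1 := by omega
    have hk' : k - 1 < d := by omega
    have hi' : i - 1 < d := by omega
    have hnum := hgs (i - 1) hi' (k - 1) hik'.le hk'
    rw [if_neg hik'.ne, sub_zero] at hnum
    have hden := hsqbd (i - 1) hi'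
    have hden2 : 97 / 100 ≤ ‖gramSchmidt ℝ (col (1 + ε • X)) (i - 1)‖ ^ 2 := by
      have := abs_le.mp hden
      nlinarith [this.1]
    rw [cPerp, cCol, abs_div, abs_of_nonneg (sq_nonneg ‖gramSchmidt ℝ (col (1 + ε • X)) (i - 1)‖)]
    calc |(inner ℝ (gramSchmidt ℝ (col (1 + ε • X)) (i - 1)) (col (1 + ε • X) (k - 1)) : ℝ)| /
          ‖gramSchmidt ℝ (col (1 + ε • X)) (i - 1)‖ ^ 2 ≤
        (3 * (ε * |Real.log ε|)) / (97 / 100) :=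
          div_le_div₀ (by positivity) hnum (by norm_num) hden2
      _ ≤ 6 * (ε * |Real.log ε|) := by rw [div_le_iff₀ (by norm_num)]; nlinarith
  · intro k hnk hkd
    have hnk' : n - 1 < k - 1 := by omega
    have hk' : k - 1 < d := by omega
    have h1 := hgs (n - 1) hlt (k - 1) hnk'.le hk'
    rw [if_neg hnk'.ne, sub_zero] at h1
    rw [cPerp, cCol]
    exact h1
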